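/- Let n ≥ 2 and let Ω ⊂ ℝⁿ (ℝⁿ = EuclideanSpace ℝ (Fin n)) be a bounded open set. Let H : Ω × ℝ → ℝ be continuous and nondecreasing in the second variable (z ↦ H(x,z) is nondecreasing for each x ∈ Ω). Suppose u and v are continuous on closure(Ω), twice continuously differentiable on Ω, both satisfy the prescribed mean curvature equation for H on Ω, and u = v on ∂Ω. Then u = v on closure(Ω). -/

import Mathlib

open Set

/-- Hessian bilinear form `D²u(x)(v, w)`. -/
noncomputable def hess {n : ℕ} (u : EuclideanSpace ℝ (Fin n) → ℝ)
    (x v w : EuclideanSpace ℝ (Fin n)) : ℝ :=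
  fderiv ℝ (fun y => fderiv ℝ u y v) x w

/-- Laplacian `Δu(x)`, the trace of the Hessian. -/
noncomputable def lap {n : ℕ} (u : EuclideanSpace ℝ (Fin n) → ℝ)
    (x : EuclideanSpace ℝ (Fin n)) : ℝ :=
  ∑ i, hess u x (EuclideanSpace.single i 1) (EuclideanSpace.single i 1)

/-- `u` satisfies the prescribed mean curvature equation for `H` on `Ω`. -/
def PMC {n : ℕ} (H : EuclideanSpace ℝ (Fin n) → ℝ → ℝ)
    (u : EuclideanSpace ℝ (Fin n) → ℝ) (Ω : Set (EuclideanSpace ℝ (Fin n))) : Prop :=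
  ∀ x ∈ Ω,
    (1 + ‖gradient u x‖ ^ 2) * lap u x - hess u x (gradient u x) (gradient u x)
      = (n : ℝ) * H x (u x) * (1 + ‖gradient u x‖ ^ 2) ^ ((3 : ℝ) / 2)


section Aux
variable {n : ℕ}


lemma hess_eq {f : EuclideanSpace ℝ (Fin n) → ℝ} {x : EuclideanSpace ℝ (Fin n)}
    (hf : DifferentiableAt ℝ (fderiv ℝ f) x) (a b : EuclideanSpace ℝ (Fin n)) :
    hess f x a b = (fderiv ℝ (fderiv ℝ f) x b) a := by
  unfold hess
  rw [show (fun y => fderiv ℝ f y a) = fun y => (fderiv ℝ f y) ((fun _ => a) y) from rfl,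
    fderiv_clm_apply hf (differentiableAt_const a)]
  simp

/-- Second derivative test at a local max, along a direction. -/
lemma second_deriv_test {f : EuclideanSpace ℝ (Fin n) → ℝ} {s : Set (EuclideanSpace ℝ (Fin n))}
    {x : EuclideanSpace ℝ (Fin n)} (hs : IsOpen s) (hx : x ∈ s)
    (hdiff : DifferentiableOn ℝ f s) (hd2 : DifferentiableAt ℝ (fderiv ℝ f) x)
    (hmax : IsLocalMax f x) (d : EuclideanSpace ℝ (Fin n)) :
    (fderiv ℝ (fderiv ℝ f) x d) d ≤ 0 := by
  by_contra hcon
  push_neg at hcon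
  set m := (fderiv ℝ (fderiv ℝ f) x d) d with hm
  set ℓ : ℝ → EuclideanSpace ℝ (Fin n) := fun t => x + t • d with hℓ
  have hℓd : ∀ t : ℝ, HasDerivAt ℓ d t := by
    intro t
    have := ((hasDerivAt_id t).smul_const d).const_add x
    rw [one_smul] at this
    exact this
  have hℓ0 : ℓ 0 = x := by simp [hℓ]
  have hℓcont : Continuous ℓ := by continuity
  set T : Set ℝ := ℓ ⁻¹' s with hT
  have hTopen : IsOpen T := hs.preimage hℓcont
  have h0T : (0 : ℝ) ∈ T := by simp [hT, hℓ0, hx]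
  set g : ℝ → ℝ := f ∘ ℓ with hg
  set g' : ℝ → ℝ := fun t => fderiv ℝ f (ℓ t) d with hg'
  have hgd : ∀ t ∈ T, HasDerivAt g (g' t) t := by
    intro t ht
    exact ((hdiff.differentiableAt (hs.mem_nhds ht)).hasFDerivAt).comp_hasDerivAt t (hℓd t)
  have hg'd : HasDerivAt g' m 0 := by
    have h1 : HasDerivAt (fun t => fderiv ℝ f (ℓ t)) (fderiv ℝ (fderiv ℝ f) x d) 0 := by
      have h0 : HasFDerivAt (fderiv ℝ f) (fderiv ℝ (fderiv ℝ f) x) (ℓ 0) := hℓ0.symm ▸ hd2.hasFDerivAt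
      exact h0.comp_hasDerivAt 0 (hℓd 0)
    have h2 := (ContinuousLinearMap.apply ℝ ℝ d).hasFDerivAt.comp_hasDerivAt 0 h1
    exact h2
  have hgmax : IsLocalMax g 0 := by
    have : Filter.Tendsto ℓ (nhds 0) (nhds x) := by
      rw [← hℓ0]; exact hℓcont.continuousAt
    have h := this.eventually hmax
    exact h.mono (fun t ht => by simpa [hg, hℓ0] using ht)
  have hg'0 : g' 0 = 0 := by
    rw [← (hgd 0 h0T).deriv]
    exact hgmax.deriv_eq_zero
  -- g' positive on a small right interval
  have hslope := hasDerivAt_iff_tendsto_slope.1 hg'd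
  have hpos : ∀ᶠ t in nhdsWithin (0:ℝ) (Ioi 0), 0 < g' t := by
    have h1 : ∀ᶠ t in nhdsWithin (0:ℝ) {(0:ℝ)}ᶜ, 0 < slope g' 0 t :=
      hslope.eventually (eventually_gt_nhds hcon)
    have h2 : nhdsWithin (0:ℝ) (Ioi 0) ≤ nhdsWithin (0:ℝ) {(0:ℝ)}ᶜ :=
      nhdsWithin_mono _ (fun t ht => ne_of_gt ht)
    filter_upwards [h2 h1, self_mem_nhdsWithin] with t ht ht'
    rw [slope_def_field, hg'0, sub_zero, sub_zero] at ht
    have := mul_pos ht (show (0:ℝ) < t from ht')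
    rwa [div_mul_cancel₀] at this
    exact ne_of_gt ht'
  rw [eventually_nhdsWithin_iff, Metric.eventually_nhds_iff] at hpos
  obtain ⟨δ₃, hδ₃, hδ₃p⟩ := hpos
  have hgev : ∀ᶠ t in nhds (0:ℝ), g t ≤ g 0 := hgmax
  rw [Metric.eventually_nhds_iff] at hgev
  obtain ⟨δ₂, hδ₂, hδ₂p⟩ := hgev
  obtain ⟨δ₁, hδ₁, hδ₁p⟩ := Metric.isOpen_iff.1 hTopen 0 h0T
  set t₀ : ℝ := min δ₁ (min δ₂ δ₃) / 2 with ht₀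
  have ht₀pos : 0 < t₀ := by positivity
  have hsub : Icc (0:ℝ) t₀ ⊆ T := by
    intro t ht
    apply hδ₁p
    rw [Metric.mem_ball, Real.dist_eq, sub_zero, abs_of_nonneg ht.1]
    calc t ≤ t₀ := ht.2
    _ < δ₁ := by rw [ht₀]; rcases le_total δ₁ (min δ₂ δ₃) with h|h <;> simp [min_eq_left, min_eq_right, h] <;> linarith
  obtain ⟨c, hc, hceq⟩ := exists_hasDerivAt_eq_slope g g' ht₀pos
    (fun t ht => (hgd t (hsub ht)).continuousAt.continuousWithinAt)
    (fun t ht => hgd t (hsub ⟨le_of_lt ht.1, le_of_lt ht.2⟩))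
  have hgt₀ : g t₀ ≤ g 0 := by
    apply hδ₂p
    rw [Real.dist_eq, sub_zero, abs_of_nonneg (le_of_lt ht₀pos)]
    calc t₀ < min δ₁ (min δ₂ δ₃) := by rw [ht₀]; linarith [lt_min hδ₁ (lt_min hδ₂ hδ₃) ]
    _ ≤ δ₂ := le_trans (min_le_right _ _) (min_le_left _ _)
  have hc3 : 0 < g' c := by
    apply hδ₃p
    · rw [Real.dist_eq, sub_zero, abs_of_nonneg (le_of_lt hc.1)]
      calc c < t₀ := hc.2
      _ < δ₃ := by
        have : t₀ < min δ₁ (min δ₂ δ₃) := by rw [ht₀]; linarith [lt_min hδ₁ (lt_min hδ₂ hδ₃)]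
        exact lt_of_lt_of_le this (le_trans (min_le_right _ _) (min_le_right _ _))
    · exact hc.1
  rw [hceq] at hc3
  have : (g t₀ - g 0) / (t₀ - 0) ≤ 0 := by
    apply div_nonpos_of_nonpos_of_nonneg <;> linarith
  linarith



lemma eucl_norm_sq (p : EuclideanSpace ℝ (Fin n)) : ‖p‖ ^ 2 = ∑ i, (p i) ^ 2 := by
  rw [EuclideanSpace.norm_eq, Real.sq_sqrt (by positivity)]
  simp [Real.norm_eq_abs, sq_abs]

lemma eucl_decomp (p : EuclideanSpace ℝ (Fin n)) :
    p = ∑ i, p i • EuclideanSpace.single i 1 := by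
  ext j
  rw [show (∑ i, p i • EuclideanSpace.single i 1) j = ∑ i, (p i • EuclideanSpace.single i (1:ℝ)) j
    from by rw [WithLp.ofLp_sum, Finset.sum_apply]]
  simp [EuclideanSpace.single_apply]

lemma trace_ineq (T : EuclideanSpace ℝ (Fin n) →L[ℝ] EuclideanSpace ℝ (Fin n) →L[ℝ] ℝ)
    (hT : ∀ d, T d d ≤ 0) (p : EuclideanSpace ℝ (Fin n)) :
    (1 + ‖p‖ ^ 2) * (∑ i, T (EuclideanSpace.single i 1) (EuclideanSpace.single i 1))
      - T p p ≤ 0 := by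
  set e : Fin n → EuclideanSpace ℝ (Fin n) := fun i => EuclideanSpace.single i 1 with he
  set L : ℝ := ∑ i, T (e i) (e i) with hL
  have hLneg : L ≤ 0 := Finset.sum_nonpos (fun i _ => hT (e i))
  have hleft : ∀ r, T p r = ∑ i, p i * T (e i) r := by
    intro r
    conv_lhs => rw [eucl_decomp p]
    rw [map_sum, ContinuousLinearMap.sum_apply]
    exact Finset.sum_congr rfl (fun i _ => by
      rw [map_smul, ContinuousLinearMap.smul_apply, smul_eq_mul])
  have hright : ∀ q, T q p = ∑ j, p j * T q (e j) := by
    intro q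
    conv_lhs => rw [eucl_decomp p]
    rw [map_sum]
    exact Finset.sum_congr rfl (fun j _ => by rw [map_smul, smul_eq_mul])
  have hTpp : T p p = ∑ i, ∑ j, p i * p j * T (e i) (e j) := by
    rw [hleft p]
    refine Finset.sum_congr rfl (fun i _ => ?_)
    rw [hright (e i), Finset.mul_sum]
    exact Finset.sum_congr rfl (fun j _ => by ring)
  have key : ‖p‖ ^ 2 * L - T p p ≤ 0 := by
    have hexp : ∀ i j, T (p i • e j - p j • e i) (p i • e j - p j • e i)
        = p i ^ 2 * T (e j) (e j) - p i * p j * T (e j) (e i)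
          - p j * p i * T (e i) (e j) + p j ^ 2 * T (e i) (e i) := by
      intro i j
      simp only [map_sub, map_smul, ContinuousLinearMap.sub_apply,
        ContinuousLinearMap.smul_apply, smul_eq_mul]
      ring
    have hsum : ∑ i, ∑ j, T (p i • e j - p j • e i) (p i • e j - p j • e i)
        = 2 * (‖p‖ ^ 2 * L - T p p) := by
      have h1 : ∑ i, ∑ j, (p i ^ 2 * T (e j) (e j)) = ‖p‖ ^ 2 * L := by
        rw [eucl_norm_sq, Finset.sum_mul]
        exact Finset.sum_congr rfl (fun i _ => by rw [← Finset.mul_sum])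
      have h4 : ∑ i, ∑ j, (p j ^ 2 * T (e i) (e i)) = ‖p‖ ^ 2 * L := by
        rw [Finset.sum_comm, eucl_norm_sq, Finset.sum_mul]
        exact Finset.sum_congr rfl (fun j _ => by rw [← Finset.mul_sum])
      have h2 : ∑ i, ∑ j, (p i * p j * T (e j) (e i)) = T p p := by
        rw [hTpp, Finset.sum_comm]
        exact Finset.sum_congr rfl (fun j _ => Finset.sum_congr rfl (fun i _ => by ring))
      have h3 : ∑ i, ∑ j, (p j * p i * T (e i) (e j)) = T p p := by
        rw [hTpp]
        exact Finset.sum_congr rfl (fun i _ => Finset.sum_congr rfl (fun j _ => by ring))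
      calc ∑ i, ∑ j, T (p i • e j - p j • e i) (p i • e j - p j • e i)
          = ∑ i, ∑ j, (p i ^ 2 * T (e j) (e j) - p i * p j * T (e j) (e i)
            - p j * p i * T (e i) (e j) + p j ^ 2 * T (e i) (e i)) := by
            exact Finset.sum_congr rfl (fun i _ => Finset.sum_congr rfl (fun j _ => hexp i j))
        _ = (∑ i, ∑ j, (p i ^ 2 * T (e j) (e j))) - (∑ i, ∑ j, (p i * p j * T (e j) (e i)))
            - (∑ i, ∑ j, (p j * p i * T (e i) (e j))) + (∑ i, ∑ j, (p j ^ 2 * T (e i) (e i))) := by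
            simp [Finset.sum_add_distrib, Finset.sum_sub_distrib]
        _ = 2 * (‖p‖ ^ 2 * L - T p p) := by rw [h1, h2, h3, h4]; ring
    have hnonpos : ∑ i, ∑ j, T (p i • e j - p j • e i) (p i • e j - p j • e i) ≤ 0 :=
      Finset.sum_nonpos (fun i _ => Finset.sum_nonpos (fun j _ => hT _))
    linarith [hsum ▸ hnonpos]
  nlinarith [hT p]

lemma cube_diff {a b M' : ℝ} (ha : 1 ≤ a) (hb : 1 ≤ b) (haM : a ≤ M') (hbM : b ≤ M') :
    |a ^ ((3:ℝ)/2) - b ^ ((3:ℝ)/2)| ≤ 3 * M' * |a - b| := by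
  have hcube : ∀ c : ℝ, 1 ≤ c → c ^ ((3:ℝ)/2) = Real.sqrt c ^ 3 := by
    intro c hc
    rw [Real.sqrt_eq_rpow, ← Real.rpow_natCast (c ^ ((1:ℝ)/2)) 3, ← Real.rpow_mul (by linarith)]
    norm_num
  rw [hcube a ha, hcube b hb]
  set x := Real.sqrt a with hx
  set y := Real.sqrt b with hy
  have hx2 : x ^ 2 = a := Real.sq_sqrt (by linarith)
  have hy2 : y ^ 2 = b := Real.sq_sqrt (by linarith)
  have hx1 : 1 ≤ x := by rw [show (1:ℝ) = Real.sqrt 1 by simp]; exact Real.sqrt_le_sqrt ha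
  have hy1 : 1 ≤ y := by rw [show (1:ℝ) = Real.sqrt 1 by simp]; exact Real.sqrt_le_sqrt hb
  have main : ∀ s t : ℝ, 1 ≤ s → 1 ≤ t → s ≤ t → s^2 ≤ M' → t^2 ≤ M' →
      t ^ 3 - s ^ 3 ≤ 3 * M' * (t^2 - s^2) := by
    intro s t hs ht hst hsM htM
    have hts : 0 ≤ t - s := by linarith
    have hsum2 : 2 ≤ s + t := by linarith
    have hts2 : t - s ≤ (t^2 - s^2)/2 := by nlinarith
    have hquad : s^2 + s*t + t^2 ≤ 3 * M' := by nlinarith [sq_nonneg (s - t)]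
    have hM0 : (0:ℝ) ≤ M' := by nlinarith
    have hfac : t^3 - s^3 = (t - s) * (s^2 + s*t + t^2) := by ring
    have h3M : (0:ℝ) ≤ 3 * M' := by linarith
    calc t^3 - s^3 = (t - s) * (s^2 + s*t + t^2) := hfac
      _ ≤ ((t^2 - s^2)/2) * (3*M') := by
          apply mul_le_mul hts2 hquad (by nlinarith) (by nlinarith)
      _ ≤ 3 * M' * (t^2 - s^2) := by nlinarith
  rcases le_total a b with h | h
  · have hxy : x ≤ y := Real.sqrt_le_sqrt h
    rw [abs_of_nonpos (by nlinarith), abs_of_nonpos (by linarith)]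
    have := main x y hx1 hy1 hxy (by rw [hx2]; exact haM) (by rw [hy2]; exact hbM)
    rw [hx2, hy2] at this
    linarith
  · have hxy : y ≤ x := Real.sqrt_le_sqrt h
    rw [abs_of_nonneg (by nlinarith), abs_of_nonneg (by linarith)]
    have := main y x hy1 hx1 hxy (by rw [hy2]; exact hbM) (by rw [hx2]; exact haM)
    rw [hx2, hy2] at this
    linarith



noncomputable def phif (α : ℝ) (i₀ : Fin n) : EuclideanSpace ℝ (Fin n) → ℝ :=
  fun x => Real.exp (α * x i₀)

lemma phif_pos (α : ℝ) (i₀ : Fin n) (x : EuclideanSpace ℝ (Fin n)) : 0 < phif α i₀ x :=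
  Real.exp_pos _

lemma hasFDerivAt_phif (α : ℝ) (i₀ : Fin n) (x : EuclideanSpace ℝ (Fin n)) :
    HasFDerivAt (phif α i₀) ((α * phif α i₀ x) • (EuclideanSpace.proj i₀ :
      EuclideanSpace ℝ (Fin n) →L[ℝ] ℝ)) x := by
  have hcoord : HasFDerivAt (fun y : EuclideanSpace ℝ (Fin n) => y i₀)
      (EuclideanSpace.proj i₀ : EuclideanSpace ℝ (Fin n) →L[ℝ] ℝ) x :=
    (EuclideanSpace.proj i₀ : EuclideanSpace ℝ (Fin n) →L[ℝ] ℝ).hasFDerivAt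
  have hlin : HasFDerivAt (fun y : EuclideanSpace ℝ (Fin n) => α * y i₀)
      (α • (EuclideanSpace.proj i₀ : EuclideanSpace ℝ (Fin n) →L[ℝ] ℝ)) x := hcoord.const_mul α
  have := hlin.exp
  rw [show Real.exp (α * x i₀) • α • (EuclideanSpace.proj i₀ :
      EuclideanSpace ℝ (Fin n) →L[ℝ] ℝ) = (α * phif α i₀ x) • (EuclideanSpace.proj i₀ :
      EuclideanSpace ℝ (Fin n) →L[ℝ] ℝ) by rw [smul_smul, mul_comm]; rfl] at this
  exact this

lemma fderiv_phif (α : ℝ) (i₀ : Fin n) (x : EuclideanSpace ℝ (Fin n)) :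
    fderiv ℝ (phif α i₀) x = (α * phif α i₀ x) • (EuclideanSpace.proj i₀ :
      EuclideanSpace ℝ (Fin n) →L[ℝ] ℝ) :=
  (hasFDerivAt_phif α i₀ x).fderiv

lemma differentiable_phif (α : ℝ) (i₀ : Fin n) : Differentiable ℝ (phif α i₀) :=
  fun x => (hasFDerivAt_phif α i₀ x).differentiableAt

lemma fderiv_phif_apply (α : ℝ) (i₀ : Fin n) (x a : EuclideanSpace ℝ (Fin n)) :
    fderiv ℝ (phif α i₀) x a = α * phif α i₀ x * a i₀ := by
  rw [fderiv_phif]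
  simp [mul_assoc]

lemma differentiableAt_fderiv_phif (α : ℝ) (i₀ : Fin n) (x : EuclideanSpace ℝ (Fin n)) :
    DifferentiableAt ℝ (fderiv ℝ (phif α i₀)) x := by
  have : (fderiv ℝ (phif α i₀)) = fun y => (α * phif α i₀ y) • (EuclideanSpace.proj i₀ :
      EuclideanSpace ℝ (Fin n) →L[ℝ] ℝ) := funext (fderiv_phif α i₀)
  rw [this]
  exact (((differentiable_phif α i₀).const_mul α).smul_const _).differentiableAt

lemma hess_phif (α : ℝ) (i₀ : Fin n) (x a b : EuclideanSpace ℝ (Fin n)) :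
    hess (phif α i₀) x a b = α ^ 2 * phif α i₀ x * a i₀ * b i₀ := by
  unfold hess
  have h1 : (fun y => fderiv ℝ (phif α i₀) y a) = fun y => (α * a i₀) * phif α i₀ y := by
    funext y
    rw [fderiv_phif_apply]
    ring
  rw [h1, fderiv_const_mul (differentiable_phif α i₀ x)]
  simp only [ContinuousLinearMap.coe_smul', Pi.smul_apply, smul_eq_mul]
  rw [fderiv_phif_apply]
  ring

lemma lap_phif (α : ℝ) (i₀ : Fin n) (x : EuclideanSpace ℝ (Fin n)) :
    lap (phif α i₀) x = α ^ 2 * phif α i₀ x := by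
  unfold lap
  rw [Finset.sum_eq_single i₀]
  · rw [hess_phif]
    simp [EuclideanSpace.single_apply]
  · intro i _ hi
    rw [hess_phif]
    simp [EuclideanSpace.single_apply, Ne.symm hi]
  · intro h
    exact absurd (Finset.mem_univ i₀) h

lemma gradient_phif (α : ℝ) (i₀ : Fin n) (x : EuclideanSpace ℝ (Fin n)) :
    gradient (phif α i₀) x = (α * phif α i₀ x) • EuclideanSpace.single i₀ 1 := by
  unfold gradient
  have key : (InnerProductSpace.toDual ℝ (EuclideanSpace ℝ (Fin n)))
      ((α * phif α i₀ x) • EuclideanSpace.single i₀ 1) = fderiv ℝ (phif α i₀) x := by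
    ext y
    rw [InnerProductSpace.toDual_apply_apply, fderiv_phif_apply, real_inner_smul_left,
      EuclideanSpace.inner_single_left]
    simp
  rw [← key, LinearIsometryEquiv.symm_apply_apply]

section comb


variable {u v : EuclideanSpace ℝ (Fin n) → ℝ} {Ω : Set (EuclideanSpace ℝ (Fin n))}
  {x : EuclideanSpace ℝ (Fin n)} (ε α : ℝ) (i₀ : Fin n)

lemma fderiv_F (hΩo : IsOpen Ω) (hud : DifferentiableOn ℝ u Ω) (hvd : DifferentiableOn ℝ v Ω)
    (hx : x ∈ Ω) :
    fderiv ℝ (fun y => u y - v y + ε * phif α i₀ y) x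
      = fderiv ℝ u x - fderiv ℝ v x + ε • fderiv ℝ (phif α i₀) x := by
  have hu' : DifferentiableAt ℝ u x := hud.differentiableAt (hΩo.mem_nhds hx)
  have hv' : DifferentiableAt ℝ v x := hvd.differentiableAt (hΩo.mem_nhds hx)
  rw [fderiv_fun_add (f := fun y => u y - v y) (hu'.sub hv') ((differentiable_phif α i₀ x).const_mul ε),
    fderiv_fun_sub hu' hv', fderiv_const_mul (differentiable_phif α i₀ x) ε]

lemma diffAt_fderiv_F (hΩo : IsOpen Ω) (hud : DifferentiableOn ℝ u Ω)
    (hvd : DifferentiableOn ℝ v Ω) (hx : x ∈ Ω)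
    (h2u : DifferentiableAt ℝ (fderiv ℝ u) x) (h2v : DifferentiableAt ℝ (fderiv ℝ v) x) :
    DifferentiableAt ℝ (fderiv ℝ (fun y => u y - v y + ε * phif α i₀ y)) x := by
  have hev : (fun y => fderiv ℝ u y - fderiv ℝ v y + ε • fderiv ℝ (phif α i₀) y)
      =ᶠ[nhds x] fderiv ℝ (fun y => u y - v y + ε * phif α i₀ y) := by
    filter_upwards [hΩo.mem_nhds hx] with y hy
    rw [fderiv_F ε α i₀ hΩo hud hvd hy]
  exact (((h2u.sub h2v).add ((differentiableAt_fderiv_phif α i₀ x).const_smul ε)).congr_of_eventuallyEq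
    hev.symm)

lemma hess_F (hΩo : IsOpen Ω) (hud : DifferentiableOn ℝ u Ω) (hvd : DifferentiableOn ℝ v Ω)
    (hx : x ∈ Ω)
    (h2u : DifferentiableAt ℝ (fderiv ℝ u) x) (h2v : DifferentiableAt ℝ (fderiv ℝ v) x)
    (a b : EuclideanSpace ℝ (Fin n)) :
    hess (fun y => u y - v y + ε * phif α i₀ y) x a b
      = hess u x a b - hess v x a b + ε * hess (phif α i₀) x a b := by
  have hev : (fun y => fderiv ℝ (fun y => u y - v y + ε * phif α i₀ y) y a)
      =ᶠ[nhds x] (fun y => fderiv ℝ u y a - fderiv ℝ v y a + ε * fderiv ℝ (phif α i₀) y a) := by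
    filter_upwards [hΩo.mem_nhds hx] with y hy
    rw [fderiv_F ε α i₀ hΩo hud hvd hy]
    simp
  have d1 : DifferentiableAt ℝ (fun y => fderiv ℝ u y a) x :=
    h2u.clm_apply (differentiableAt_const a)
  have d2 : DifferentiableAt ℝ (fun y => fderiv ℝ v y a) x :=
    h2v.clm_apply (differentiableAt_const a)
  have d3 : DifferentiableAt ℝ (fun y => fderiv ℝ (phif α i₀) y a) x :=
    (differentiableAt_fderiv_phif α i₀ x).clm_apply (differentiableAt_const a)
  show fderiv ℝ (fun y => fderiv ℝ (fun y => u y - v y + ε * phif α i₀ y) y a) x b = _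
  rw [hev.fderiv_eq, fderiv_fun_add (f := fun y => fderiv ℝ u y a - fderiv ℝ v y a) (d1.sub d2) (d3.const_mul ε), fderiv_fun_sub d1 d2,
    fderiv_const_mul d3 ε]
  simp only [ContinuousLinearMap.add_apply, ContinuousLinearMap.sub_apply,
    ContinuousLinearMap.coe_smul', Pi.smul_apply, smul_eq_mul]
  rfl

lemma lap_F (hΩo : IsOpen Ω) (hud : DifferentiableOn ℝ u Ω) (hvd : DifferentiableOn ℝ v Ω)
    (hx : x ∈ Ω)
    (h2u : DifferentiableAt ℝ (fderiv ℝ u) x) (h2v : DifferentiableAt ℝ (fderiv ℝ v) x) :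
    lap (fun y => u y - v y + ε * phif α i₀ y) x
      = lap u x - lap v x + ε * lap (phif α i₀) x := by
  unfold lap
  rw [Finset.mul_sum, ← Finset.sum_sub_distrib, ← Finset.sum_add_distrib]
  exact Finset.sum_congr rfl (fun i _ => hess_F ε α i₀ hΩo hud hvd hx h2u h2v _ _)

end comb

end Aux
set_option maxHeartbeats 1000000 in
theorem main_half (n : ℕ) (hn : 2 ≤ n)
    (Ω : Set (EuclideanSpace ℝ (Fin n))) (hΩo : IsOpen Ω)
    (hΩb : Bornology.IsBounded Ω)
    (H : EuclideanSpace ℝ (Fin n) → ℝ → ℝ)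
    (hHcont : ContinuousOn (fun q : EuclideanSpace ℝ (Fin n) × ℝ => H q.1 q.2)
      (Ω ×ˢ univ))
    (hHmono : ∀ x ∈ Ω, Monotone (H x))
    (u v : EuclideanSpace ℝ (Fin n) → ℝ)
    (hucont : ContinuousOn u (closure Ω)) (hvcont : ContinuousOn v (closure Ω))
    (husmooth : ContDiffOn ℝ 2 u Ω) (hvsmooth : ContDiffOn ℝ 2 v Ω)
    (hueq : PMC H u Ω) (hveq : PMC H v Ω)
    (hbd : EqOn u v (frontier Ω)) :
    ∀ x ∈ closure Ω, u x ≤ v x := by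
  by_contra hcon
  push_neg at hcon
  obtain ⟨x₀, hx₀c, hx₀⟩ := hcon
  obtain ⟨w, hw⟩ : ∃ w : EuclideanSpace ℝ (Fin n) → ℝ, w = fun y => u y - v y := ⟨_, rfl⟩
  have hwy : ∀ y, w y = u y - v y := fun y => by rw [hw]
  have hwc : ContinuousOn w (closure Ω) := by rw [hw]; exact hucont.sub hvcont
  have hclc : IsCompact (closure Ω) := hΩb.isCompact_closure
  obtain ⟨z, hzc, hzmax⟩ := hclc.exists_isMaxOn ⟨x₀, hx₀c⟩ hwc
  obtain ⟨M, hMdef⟩ : ∃ M : ℝ, M = w z := ⟨_, rfl⟩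
  have hM : 0 < M := by
    rw [hMdef]
    calc (0:ℝ) < u x₀ - v x₀ := sub_pos.2 hx₀
      _ = w x₀ := (hwy x₀).symm
      _ ≤ w z := hzmax hx₀c
  have hwleM : ∀ x ∈ closure Ω, w x ≤ M := fun x hx => hMdef ▸ hzmax hx
  obtain ⟨K, hK⟩ : ∃ K : Set (EuclideanSpace ℝ (Fin n)),
      K = closure Ω ∩ w ⁻¹' Ici (M/2) := ⟨_, rfl⟩
  have hKcl : IsClosed K := by
    rw [hK]; exact hwc.preimage_isClosed_of_isClosed isClosed_closure isClosed_Ici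
  have hKcp : IsCompact K := hclc.of_isClosed_subset hKcl (by rw [hK]; exact inter_subset_left)
  have hKmem : ∀ x, x ∈ K ↔ (x ∈ closure Ω ∧ M/2 ≤ w x) := by
    intro x; rw [hK]; exact Iff.rfl
  have hKΩ : K ⊆ Ω := by
    intro x hx
    rw [hKmem] at hx
    by_contra hxΩ
    have hfr : x ∈ frontier Ω := by rw [hΩo.frontier_eq]; exact ⟨hx.1, hxΩ⟩
    have h0 : w x = 0 := by rw [hwy, sub_eq_zero]; exact hbd hfr
    have := hx.2
    rw [h0] at this
    linarith
  have hzK : z ∈ K := by rw [hKmem]; exact ⟨hzc, by rw [← hMdef]; linarith⟩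
  have hzΩ : z ∈ Ω := hKΩ hzK
  obtain ⟨Ω', hΩ'⟩ : ∃ Ω' : Set (EuclideanSpace ℝ (Fin n)),
      Ω' = Ω ∩ w ⁻¹' Ioi (M/2) := ⟨_, rfl⟩
  have hΩ'mem : ∀ x, x ∈ Ω' ↔ (x ∈ Ω ∧ M/2 < w x) := by
    intro x; rw [hΩ']; exact Iff.rfl
  have hΩ'o : IsOpen Ω' := by
    rw [hΩ']; exact (hwc.mono subset_closure).isOpen_inter_preimage hΩo isOpen_Ioi
  have hΩ'K : closure Ω' ⊆ K :=
    closure_minimal (fun x hx => by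
      rw [hΩ'mem] at hx
      rw [hKmem]
      exact ⟨subset_closure hx.1, le_of_lt hx.2⟩) hKcl
  have hzΩ' : z ∈ Ω' := by rw [hΩ'mem]; exact ⟨hzΩ, by rw [← hMdef]; linarith⟩
  -- differentiability infrastructure
  have hud : DifferentiableOn ℝ u Ω := husmooth.differentiableOn (by norm_num)
  have hvd : DifferentiableOn ℝ v Ω := hvsmooth.differentiableOn (by norm_num)
  have hDu1 : ContDiffOn ℝ 1 (fderiv ℝ u) Ω := husmooth.fderiv_of_isOpen hΩo (by norm_num)
  have hDv1 : ContDiffOn ℝ 1 (fderiv ℝ v) Ω := hvsmooth.fderiv_of_isOpen hΩo (by norm_num)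
  have h2u : ∀ x ∈ Ω, DifferentiableAt ℝ (fderiv ℝ u) x := fun x hx =>
    (hDu1.differentiableOn one_ne_zero).differentiableAt (hΩo.mem_nhds hx)
  have h2v : ∀ x ∈ Ω, DifferentiableAt ℝ (fderiv ℝ v) x := fun x hx =>
    (hDv1.differentiableOn one_ne_zero).differentiableAt (hΩo.mem_nhds hx)
  have hD2vcont : ContinuousOn (fderiv ℝ (fderiv ℝ v)) Ω :=
    hDv1.continuousOn_fderiv_of_isOpen hΩo le_rfl
  have hDucont : ContinuousOn (fderiv ℝ u) Ω :=
    husmooth.continuousOn_fderiv_of_isOpen hΩo (by norm_num)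
  have hDvcont : ContinuousOn (fderiv ℝ v) Ω :=
    hvsmooth.continuousOn_fderiv_of_isOpen hΩo (by norm_num)
  have hgradu : ContinuousOn (fun x => gradient u x) Ω :=
    (InnerProductSpace.toDual ℝ (EuclideanSpace ℝ (Fin n))).symm.continuous.comp_continuousOn
      hDucont
  have hgradv : ContinuousOn (fun x => gradient v x) Ω :=
    (InnerProductSpace.toDual ℝ (EuclideanSpace ℝ (Fin n))).symm.continuous.comp_continuousOn
      hDvcont
  -- bounds on K
  obtain ⟨P₁, hP₁⟩ := hKcp.exists_bound_of_continuousOn (hgradu.mono hKΩ)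
  obtain ⟨P₂, hP₂⟩ := hKcp.exists_bound_of_continuousOn (hgradv.mono hKΩ)
  obtain ⟨P, hPdef⟩ : ∃ P : ℝ, P = max P₁ P₂ := ⟨_, rfl⟩
  have hPu : ∀ x ∈ K, ‖gradient u x‖ ≤ P := fun x hx =>
    le_trans (hP₁ x hx) (hPdef ▸ le_max_left _ _)
  have hPv : ∀ x ∈ K, ‖gradient v x‖ ≤ P := fun x hx =>
    le_trans (hP₂ x hx) (hPdef ▸ le_max_right _ _)
  have hP0 : 0 ≤ P := le_trans (norm_nonneg _) (hPu z hzK)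
  obtain ⟨B₀, hB₀⟩ := hKcp.exists_bound_of_continuousOn (f := fderiv ℝ (fderiv ℝ v)) (hD2vcont.mono hKΩ)
  obtain ⟨B, hBdef⟩ : ∃ B : ℝ, B = max B₀ 0 := ⟨_, rfl⟩
  have hB : ∀ x ∈ K, ‖fderiv ℝ (fderiv ℝ v) x‖ ≤ B := fun x hx =>
    le_trans (hB₀ x hx) (hBdef ▸ le_max_left _ _)
  have hB0 : (0:ℝ) ≤ B := hBdef ▸ le_max_right _ _
  have hHcK : ContinuousOn (fun x => H x (v x)) K := by
    have hmap : MapsTo (fun x => (x, v x)) K (Ω ×ˢ univ) := fun x hx =>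
      ⟨hKΩ hx, mem_univ _⟩
    exact hHcont.comp (continuousOn_id.prodMk (hvcont.mono (hKΩ.trans subset_closure))) hmap
  obtain ⟨h₁, hh₁⟩ := hKcp.exists_bound_of_continuousOn hHcK
  obtain ⟨h₀, hh₀def⟩ : ∃ h₀ : ℝ, h₀ = max h₁ 0 := ⟨_, rfl⟩
  have hh₀ : ∀ x ∈ K, |H x (v x)| ≤ h₀ := fun x hx => by
    have := hh₁ x hx
    rw [Real.norm_eq_abs] at this
    exact le_trans this (hh₀def ▸ le_max_left _ _)
  have hh₀0 : (0:ℝ) ≤ h₀ := hh₀def ▸ le_max_right _ _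
  -- constants
  obtain ⟨C, hCdef⟩ : ∃ C : ℝ, C = 6*n*h₀*P*(1+P^2) + 2*P*B*(n+1) := ⟨_, rfl⟩
  have hC0 : 0 ≤ C := by rw [hCdef]; positivity
  obtain ⟨α, hαdef⟩ : ∃ α : ℝ, α = C + 1 := ⟨_, rfl⟩
  have hα : 0 < α := by rw [hαdef]; linarith
  have i₀ : Fin n := ⟨0, by omega⟩
  have hφcont : Continuous (phif α i₀) := (differentiable_phif α i₀).continuous
  obtain ⟨Φ, hΦ'⟩ := hKcp.exists_bound_of_continuousOn hφcont.continuousOn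
  have hφΦ : ∀ x ∈ K, phif α i₀ x ≤ Φ := fun x hx => le_trans (le_abs_self _)
    (by have := hΦ' x hx; rwa [Real.norm_eq_abs] at this)
  have hΦpos : 0 < Φ := lt_of_lt_of_le (phif_pos α i₀ z) (hφΦ z hzK)
  obtain ⟨ε, hεdef⟩ : ∃ ε : ℝ, ε = M / (2*Φ) := ⟨_, rfl⟩
  have hε : 0 < ε := by rw [hεdef]; positivity
  have hεΦ : ε * Φ = M/2 := by rw [hεdef]; field_simp
  -- maximize F on closure Ω'
  have hFcont : ContinuousOn (fun y => u y - v y + ε * phif α i₀ y) (closure Ω') :=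
    ((hucont.sub hvcont).mono ((hΩ'K.trans hKΩ).trans subset_closure)).add
      (continuous_const.mul hφcont).continuousOn
  have hclΩ'cp : IsCompact (closure Ω') := hKcp.of_isClosed_subset isClosed_closure hΩ'K
  obtain ⟨xs, hxscl, hxsmax⟩ := hclΩ'cp.exists_isMaxOn ⟨z, subset_closure hzΩ'⟩ hFcont
  have hxsK : xs ∈ K := hΩ'K hxscl
  by_cases hxsΩ' : xs ∈ Ω'
  · -- interior maximum: contradiction via the differential inequality
    have hxsΩ : xs ∈ Ω := ((hΩ'mem xs).1 hxsΩ').1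
    have hwxsgt : M/2 < w xs := ((hΩ'mem xs).1 hxsΩ').2
    have hloc : IsLocalMax (fun y => u y - v y + ε * phif α i₀ y) xs :=
      hxsmax.isLocalMax (Filter.mem_of_superset (hΩ'o.mem_nhds hxsΩ') subset_closure)
    have hFd : DifferentiableOn ℝ (fun y => u y - v y + ε * phif α i₀ y) Ω :=
      (hud.sub hvd).add ((differentiable_phif α i₀).const_mul ε).differentiableOn
    have h2F : DifferentiableAt ℝ (fderiv ℝ (fun y => u y - v y + ε * phif α i₀ y)) xs :=
      diffAt_fderiv_F ε α i₀ hΩo hud hvd hxsΩ (h2u xs hxsΩ) (h2v xs hxsΩ)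
    have hcrit : fderiv ℝ (fun y => u y - v y + ε * phif α i₀ y) xs = 0 :=
      hloc.fderiv_eq_zero
    obtain ⟨p, hpdef⟩ : ∃ p, p = gradient u xs := ⟨_, rfl⟩
    obtain ⟨q, hqdef⟩ : ∃ q, q = gradient v xs := ⟨_, rfl⟩
    obtain ⟨μ, hμdef⟩ : ∃ μ : ℝ, μ = ε * (α * phif α i₀ xs) := ⟨_, rfl⟩
    have hφxs : 0 < phif α i₀ xs := phif_pos α i₀ xs
    have hμpos : 0 < μ := by rw [hμdef]; positivity
    have hpq : p = q - μ • EuclideanSpace.single i₀ 1 := by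
      have h1 : fderiv ℝ u xs = fderiv ℝ v xs - ε • fderiv ℝ (phif α i₀) xs := by
        have h2 := fderiv_F ε α i₀ hΩo hud hvd hxsΩ
        rw [hcrit] at h2
        have h3 : fderiv ℝ u xs - fderiv ℝ v xs + ε • fderiv ℝ (phif α i₀) xs = 0 := h2.symm
        rw [← sub_eq_zero]
        have h4 : fderiv ℝ u xs - (fderiv ℝ v xs - ε • fderiv ℝ (phif α i₀) xs)
            = fderiv ℝ u xs - fderiv ℝ v xs + ε • fderiv ℝ (phif α i₀) xs := by abel
        rw [h4]
        exact h3
      have h4 : gradient u xs = gradient v xs - ε • gradient (phif α i₀) xs := by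
        unfold gradient
        rw [h1, map_sub, map_smul]
      rw [hpdef, hqdef, h4, gradient_phif, smul_smul, hμdef]
    have hpmq : p - q = -(μ • EuclideanSpace.single i₀ 1) := by rw [hpq]; abel
    have hpmqn : ‖p - q‖ = μ := by
      rw [hpmq, norm_neg, norm_smul, EuclideanSpace.norm_single]
      simp [abs_of_pos hμpos]
    -- upper bound (maximum principle direction)
    have hTneg : ∀ d, (fderiv ℝ (fderiv ℝ (fun y => u y - v y + ε * phif α i₀ y)) xs d) d ≤ 0 :=
      fun d => second_deriv_test hΩo hxsΩ hFd h2F hloc d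
    have hSle : (1 + ‖p‖^2) * lap (fun y => u y - v y + ε * phif α i₀ y) xs
        - hess (fun y => u y - v y + ε * phif α i₀ y) xs p p ≤ 0 := by
      have h1 : lap (fun y => u y - v y + ε * phif α i₀ y) xs
          = ∑ i, (fderiv ℝ (fderiv ℝ (fun y => u y - v y + ε * phif α i₀ y)) xs
              (EuclideanSpace.single i 1)) (EuclideanSpace.single i 1) := by
        unfold lap
        exact Finset.sum_congr rfl (fun i _ => hess_eq h2F _ _)
      have h2 : hess (fun y => u y - v y + ε * phif α i₀ y) xs p p
          = (fderiv ℝ (fderiv ℝ (fun y => u y - v y + ε * phif α i₀ y)) xs p) p :=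
        hess_eq h2F _ _
      rw [h1, h2]
      exact trace_ineq _ hTneg p
    -- the PDE at xs
    have e1 : (1 + ‖p‖^2) * lap u xs - hess u xs p p
        = (n : ℝ) * H xs (u xs) * (1 + ‖p‖^2) ^ ((3:ℝ)/2) := by
      rw [hpdef]; exact hueq xs hxsΩ
    have e2 : (1 + ‖q‖^2) * lap v xs - hess v xs q q
        = (n : ℝ) * H xs (v xs) * (1 + ‖q‖^2) ^ ((3:ℝ)/2) := by
      rw [hqdef]; exact hveq xs hxsΩ
    have hlapF : lap (fun y => u y - v y + ε * phif α i₀ y) xs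
        = lap u xs - lap v xs + ε * lap (phif α i₀) xs :=
      lap_F ε α i₀ hΩo hud hvd hxsΩ (h2u xs hxsΩ) (h2v xs hxsΩ)
    have hhessF : hess (fun y => u y - v y + ε * phif α i₀ y) xs p p
        = hess u xs p p - hess v xs p p + ε * hess (phif α i₀) xs p p :=
      hess_F ε α i₀ hΩo hud hvd hxsΩ (h2u xs hxsΩ) (h2v xs hxsΩ) p p
    have hSform : (1 + ‖p‖^2) * lap (fun y => u y - v y + ε * phif α i₀ y) xs
          - hess (fun y => u y - v y + ε * phif α i₀ y) xs p p
        = (n : ℝ) * H xs (u xs) * (1 + ‖p‖^2) ^ ((3:ℝ)/2)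
          - (n : ℝ) * H xs (v xs) * (1 + ‖q‖^2) ^ ((3:ℝ)/2)
          - ((‖p‖^2 - ‖q‖^2) * lap v xs - (hess v xs p p - hess v xs q q))
          + ε * (α^2 * phif α i₀ xs * (1 + ‖p‖^2 - (p i₀)^2)) := by
      rw [hlapF, hhessF, lap_phif, hess_phif]
      linear_combination e1 - e2
    -- quantitative bounds
    have hPp : ‖p‖ ≤ P := hpdef ▸ hPu xs hxsK
    have hPq : ‖q‖ ≤ P := hqdef ▸ hPv xs hxsK
    have hBv : ∀ a b, |hess v xs a b| ≤ B * ‖a‖ * ‖b‖ := by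
      intro a b
      rw [hess_eq (h2v xs hxsΩ)]
      calc |(fderiv ℝ (fderiv ℝ v) xs b) a| ≤ ‖fderiv ℝ (fderiv ℝ v) xs b‖ * ‖a‖ := by
            rw [← Real.norm_eq_abs]; exact (fderiv ℝ (fderiv ℝ v) xs b).le_opNorm a
        _ ≤ (‖fderiv ℝ (fderiv ℝ v) xs‖ * ‖b‖) * ‖a‖ :=
            mul_le_mul_of_nonneg_right ((fderiv ℝ (fderiv ℝ v) xs).le_opNorm b) (norm_nonneg _)
        _ ≤ (B * ‖b‖) * ‖a‖ := mul_le_mul_of_nonneg_right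
              (mul_le_mul_of_nonneg_right (hB xs hxsK) (norm_nonneg _)) (norm_nonneg _)
        _ = B * ‖a‖ * ‖b‖ := by ring
    have hlapvB : |lap v xs| ≤ n * B := by
      unfold lap
      calc |∑ i, hess v xs (EuclideanSpace.single i 1) (EuclideanSpace.single i 1)|
          ≤ ∑ i : Fin n, |hess v xs (EuclideanSpace.single i 1) (EuclideanSpace.single i 1)| :=
            Finset.abs_sum_le_sum_abs _ _
        _ ≤ ∑ _i : Fin n, B := Finset.sum_le_sum (fun i _ => by
            have h5 := hBv (EuclideanSpace.single i 1) (EuclideanSpace.single i 1)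
            rw [EuclideanSpace.norm_single] at h5
            simpa using h5)
        _ = n * B := by simp [mul_comm]
    have hd1 : |‖p‖^2 - ‖q‖^2| ≤ 2*P*μ := by
      have h8 : |‖p‖ - ‖q‖| ≤ μ := by rw [← hpmqn]; exact abs_norm_sub_norm_le p q
      rw [show ‖p‖^2 - ‖q‖^2 = (‖p‖ - ‖q‖)*(‖p‖+‖q‖) by ring, abs_mul]
      calc |‖p‖ - ‖q‖| * |‖p‖ + ‖q‖| ≤ μ * (2*P) := by
            apply mul_le_mul h8 _ (abs_nonneg _) (le_of_lt hμpos)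
            rw [abs_of_nonneg (by positivity)]
            linarith
        _ = 2*P*μ := by ring
    have hd2 : |hess v xs p p - hess v xs q q| ≤ 2*P*B*μ := by
      have hsplit : hess v xs p p - hess v xs q q
          = hess v xs p (p - q) + hess v xs (p - q) q := by
        simp only [hess_eq (h2v xs hxsΩ)]
        simp only [map_sub, ContinuousLinearMap.sub_apply]
        ring
      rw [hsplit]
      calc |hess v xs p (p - q) + hess v xs (p - q) q|
          ≤ |hess v xs p (p - q)| + |hess v xs (p - q) q| := abs_add_le _ _
        _ ≤ B * ‖p‖ * ‖p - q‖ + B * ‖p - q‖ * ‖q‖ := add_le_add (hBv _ _) (hBv _ _)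
        _ ≤ B * P * μ + B * μ * P := by
            rw [hpmqn]
            exact add_le_add
              (mul_le_mul_of_nonneg_right (mul_le_mul_of_nonneg_left hPp hB0) (le_of_lt hμpos))
              (mul_le_mul_of_nonneg_left hPq (by positivity))
        _ = 2*P*B*μ := by ring
    have ha1 : (1:ℝ) ≤ 1 + ‖p‖^2 := by linarith only [sq_nonneg ‖p‖]
    have hb1 : (1:ℝ) ≤ 1 + ‖q‖^2 := by linarith only [sq_nonneg ‖q‖]
    have haM : 1 + ‖p‖^2 ≤ 1 + P^2 := by
      linarith only [pow_le_pow_left₀ (norm_nonneg p) hPp 2]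
    have hbM : 1 + ‖q‖^2 ≤ 1 + P^2 := by
      linarith only [pow_le_pow_left₀ (norm_nonneg q) hPq 2]
    have hcube : |(1 + ‖p‖^2)^((3:ℝ)/2) - (1 + ‖q‖^2)^((3:ℝ)/2)| ≤ 3*(1+P^2)*(2*P*μ) := by
      calc |(1 + ‖p‖^2)^((3:ℝ)/2) - (1 + ‖q‖^2)^((3:ℝ)/2)|
          ≤ 3*(1+P^2)*|(1 + ‖p‖^2) - (1 + ‖q‖^2)| := cube_diff ha1 hb1 haM hbM
        _ = 3*(1+P^2)*|‖p‖^2 - ‖q‖^2| := by ring_nf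
        _ ≤ 3*(1+P^2)*(2*P*μ) := mul_le_mul_of_nonneg_left hd1 (by positivity)
    have hvu : v xs ≤ u xs := by
      have h9 := hwy xs
      linarith only [h9, hwxsgt, hM]
    have hmonoH : H xs (v xs) ≤ H xs (u xs) := hHmono xs hxsΩ hvu
    have hrpA : (0:ℝ) ≤ (1 + ‖p‖^2) ^ ((3:ℝ)/2) := Real.rpow_nonneg (by positivity) _
    have hHvb : |H xs (v xs)| ≤ h₀ := hh₀ xs hxsK
    have hpi₀ : (p i₀)^2 ≤ ‖p‖^2 := by
      rw [eucl_norm_sq]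
      exact Finset.single_le_sum (fun i _ => sq_nonneg (p i)) (Finset.mem_univ i₀)
    -- assemble the lower bound
    have k1 : 0 ≤ (n : ℝ) * H xs (u xs) * (1 + ‖p‖^2) ^ ((3:ℝ)/2)
        - (n : ℝ) * H xs (v xs) * (1 + ‖p‖^2) ^ ((3:ℝ)/2) := by
      have hnn : (0:ℝ) ≤ (n:ℝ) := Nat.cast_nonneg n
      have h9 := mul_nonneg (mul_nonneg hnn (sub_nonneg.2 hmonoH)) hrpA
      have heq : (n:ℝ) * (H xs (u xs) - H xs (v xs)) * (1 + ‖p‖^2) ^ ((3:ℝ)/2)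
          = (n : ℝ) * H xs (u xs) * (1 + ‖p‖^2) ^ ((3:ℝ)/2)
            - (n : ℝ) * H xs (v xs) * (1 + ‖p‖^2) ^ ((3:ℝ)/2) := by ring
      linarith only [h9, heq]
    have k2 : (n : ℝ) * H xs (v xs) * (1 + ‖p‖^2) ^ ((3:ℝ)/2)
        - (n : ℝ) * H xs (v xs) * (1 + ‖q‖^2) ^ ((3:ℝ)/2)
        ≥ -((n:ℝ) * h₀ * (3*(1+P^2)*(2*P*μ))) := by
      have habs : |(n : ℝ) * H xs (v xs) * ((1 + ‖p‖^2) ^ ((3:ℝ)/2)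
          - (1 + ‖q‖^2) ^ ((3:ℝ)/2))| ≤ (n:ℝ) * h₀ * (3*(1+P^2)*(2*P*μ)) := by
        rw [abs_mul, abs_mul, Nat.abs_cast, mul_assoc]
        have h6 : |H xs (v xs)| * |(1 + ‖p‖^2) ^ ((3:ℝ)/2) - (1 + ‖q‖^2) ^ ((3:ℝ)/2)|
            ≤ h₀ * (3*(1+P^2)*(2*P*μ)) :=
          mul_le_mul hHvb hcube (abs_nonneg _) hh₀0
        calc (n:ℝ) * (|H xs (v xs)| * |(1 + ‖p‖^2) ^ ((3:ℝ)/2) - (1 + ‖q‖^2) ^ ((3:ℝ)/2)|)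
            ≤ (n:ℝ) * (h₀ * (3*(1+P^2)*(2*P*μ))) :=
              mul_le_mul_of_nonneg_left h6 (Nat.cast_nonneg n)
          _ = (n:ℝ) * h₀ * (3*(1+P^2)*(2*P*μ)) := by ring
      have heq : (n : ℝ) * H xs (v xs) * ((1 + ‖p‖^2) ^ ((3:ℝ)/2) - (1 + ‖q‖^2) ^ ((3:ℝ)/2))
          = (n : ℝ) * H xs (v xs) * (1 + ‖p‖^2) ^ ((3:ℝ)/2)
            - (n : ℝ) * H xs (v xs) * (1 + ‖q‖^2) ^ ((3:ℝ)/2) := by ring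
      have := neg_abs_le ((n : ℝ) * H xs (v xs) * ((1 + ‖p‖^2) ^ ((3:ℝ)/2)
        - (1 + ‖q‖^2) ^ ((3:ℝ)/2)))
      linarith only [this, habs, heq]
    have k3 : -((‖p‖^2 - ‖q‖^2) * lap v xs - (hess v xs p p - hess v xs q q))
        ≥ -((2*P*μ)*((n:ℝ)*B) + 2*P*B*μ) := by
      have habs : |(‖p‖^2 - ‖q‖^2) * lap v xs - (hess v xs p p - hess v xs q q)|
          ≤ (2*P*μ)*((n:ℝ)*B) + 2*P*B*μ := by
        calc |(‖p‖^2 - ‖q‖^2) * lap v xs - (hess v xs p p - hess v xs q q)|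
            ≤ |(‖p‖^2 - ‖q‖^2) * lap v xs| + |hess v xs p p - hess v xs q q| := abs_sub _ _
          _ ≤ (2*P*μ)*((n:ℝ)*B) + 2*P*B*μ := by
              apply add_le_add _ hd2
              rw [abs_mul]
              exact mul_le_mul hd1 hlapvB (abs_nonneg _) (by positivity)
      linarith only [le_abs_self ((‖p‖^2 - ‖q‖^2) * lap v xs
        - (hess v xs p p - hess v xs q q)), habs]
    have k4 : ε * (α^2 * phif α i₀ xs * (1 + ‖p‖^2 - (p i₀)^2)) ≥ α * μ := by
      have hone : (1:ℝ) ≤ 1 + ‖p‖^2 - (p i₀)^2 := by linarith [hpi₀]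
      have h5 : (0:ℝ) ≤ ε * (α^2 * phif α i₀ xs) := by positivity
      have h6 := mul_le_mul_of_nonneg_left hone h5
      have heq : α * μ = ε * (α^2 * phif α i₀ xs) * 1 := by rw [hμdef]; ring
      calc α * μ = ε * (α^2 * phif α i₀ xs) * 1 := heq
        _ ≤ ε * (α^2 * phif α i₀ xs) * (1 + ‖p‖^2 - (p i₀)^2) := h6
        _ = ε * (α^2 * phif α i₀ xs * (1 + ‖p‖^2 - (p i₀)^2)) := by ring
    have heq2 : (n:ℝ)*h₀*(3*(1+P^2)*(2*P*μ)) + ((2*P*μ)*((n:ℝ)*B) + 2*P*B*μ) + μ = α*μ := by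
      rw [hαdef, hCdef]; ring
    have hfinal : 0 < (1 + ‖p‖^2) * lap (fun y => u y - v y + ε * phif α i₀ y) xs
        - hess (fun y => u y - v y + ε * phif α i₀ y) xs p p := by
      rw [hSform]
      linarith only [k1, k2, k3, k4, heq2, hμpos]
    exact absurd hfinal (not_lt.2 hSle)
  · -- boundary maximum: direct contradiction
    have hwxs : w xs ≤ M/2 := by
      rcases em (xs ∈ Ω) with hxsΩ | hxsΩ
      · by_contra hgt
        exact hxsΩ' ((hΩ'mem xs).2 ⟨hxsΩ, by linarith⟩)
      · have hfr : xs ∈ frontier Ω := by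
          rw [hΩo.frontier_eq]
          exact ⟨((hKmem xs).1 hxsK).1, hxsΩ⟩
        have h0 : w xs = 0 := by rw [hwy, sub_eq_zero]; exact hbd hfr
        rw [h0]; linarith
    have hFz : u z - v z + ε * phif α i₀ z ≤ u xs - v xs + ε * phif α i₀ xs :=
      hxsmax (subset_closure hzΩ')
    have hzM : u z - v z = M := by rw [hMdef, hwy]
    have hxsM : u xs - v xs ≤ M/2 := by rw [← hwy]; exact hwxs
    have hφxsΦ : phif α i₀ xs ≤ Φ := hφΦ xs hxsK
    have hφz : 0 < phif α i₀ z := phif_pos α i₀ z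
    have h7 : ε * phif α i₀ xs ≤ ε * Φ := mul_le_mul_of_nonneg_left hφxsΦ (le_of_lt hε)
    linarith only [hFz, hzM, hxsM, h7, hεΦ, mul_pos hε hφz]

/-- Uniqueness via the maximum principle: two solutions of the prescribed mean curvature
equation for `H` (continuous, nondecreasing in `z`) on a bounded open `Ω ⊂ ℝⁿ` that agree
on `∂Ω` agree on `closure Ω`. -/
theorem uniqueness_pmc (n : ℕ) (hn : 2 ≤ n)
    (Ω : Set (EuclideanSpace ℝ (Fin n))) (hΩo : IsOpen Ω)
    (hΩb : Bornology.IsBounded Ω)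
    (H : EuclideanSpace ℝ (Fin n) → ℝ → ℝ)
    (hHcont : ContinuousOn (fun q : EuclideanSpace ℝ (Fin n) × ℝ => H q.1 q.2)
      (Ω ×ˢ univ))
    (hHmono : ∀ x ∈ Ω, Monotone (H x))
    (u v : EuclideanSpace ℝ (Fin n) → ℝ)
    (hucont : ContinuousOn u (closure Ω)) (hvcont : ContinuousOn v (closure Ω))
    (husmooth : ContDiffOn ℝ 2 u Ω) (hvsmooth : ContDiffOn ℝ 2 v Ω)
    (hueq : PMC H u Ω) (hveq : PMC H v Ω)
    (hbd : EqOn u v (frontier Ω)) :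
    EqOn u v (closure Ω) := by
  intro x hx
  exact le_antisymm
    (main_half n hn Ω hΩo hΩb H hHcont hHmono u v hucont hvcont husmooth hvsmooth
      hueq hveq hbd x hx)
    (main_half n hn Ω hΩo hΩb H hHcont hHmono v u hvcont hucont hvsmooth husmooth
      hveq hueq hbd.symm x hx)
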